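/- arXiv:2001.06709 — 3 statements merged into one kernel-verified Lean document; each statement's English description precedes it below -/
import Mathlib

section
/- Let A be a k-algebra with center Z, and let f1,...,fn be elements of Z[Y1,...,Yn] (polynomials with central coefficients inside A[Y1,...,Yn]) such that the Z-subalgebra of Z[Y1,...,Yn] generated by f1,...,fn is all of Z[Y1,...,Yn]. Then the ring endomorphism τ of A[Y1,...,Yn] that restricts to the identity on A and sends Yi to fi for each 1 ≤ i ≤ n is an isomorphism. -/
open scoped TensorProduct

universe u

/-- The polynomial extension `A[t₁,…,tₙ]` of a (possibly noncommutative) `k`-algebra `A`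
in `n` central, mutually commuting indeterminates. -/
abbrev PolyExt (A : Type u) [Ring A] (n : ℕ) : Type u :=
  AddMonoidAlgebra A (Fin n →₀ ℕ)

/-- The canonical embedding `A → A[t₁,…,tₙ]` as constant polynomials. -/
noncomputable def PolyExt.C (k A : Type u) [Field k] [Ring A] [Algebra k A] (n : ℕ) :
    A →ₐ[k] PolyExt A n :=
  AddMonoidAlgebra.singleZeroAlgHom

/-- The `i`-th indeterminate of `A[t₁,…,tₙ]`. -/
noncomputable def PolyExt.X (A : Type u) [Ring A] (n : ℕ) (i : Fin n) : PolyExt A n :=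
  AddMonoidAlgebra.single (Finsupp.single i 1) 1

/-- Two rings are Morita equivalent if their categories of right modules are
equivalent (as abelian categories). -/
def MoritaEquivalent (R S : Type u) [Ring R] [Ring S] : Prop :=
  Nonempty (ModuleCat.{u} Rᵐᵒᵖ ≌ ModuleCat.{u} Sᵐᵒᵖ)

/-- `A` is strongly cancellative: for every `n ≥ 1` and every `k`-algebra `B`, any
`k`-algebra isomorphism `A[s₁,…,sₙ] ≅ B[t₁,…,tₙ]` implies `A ≅ B`. -/
def StronglyCancellative (k A : Type u) [Field k] [Ring A] [Algebra k A] : Prop :=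
  ∀ (n : ℕ), 1 ≤ n → ∀ (B : Type u) [Ring B] [Algebra k B],
    Nonempty (PolyExt A n ≃ₐ[k] PolyExt B n) → Nonempty (A ≃ₐ[k] B)

/-- `A` is strongly Morita cancellative: for every `n ≥ 1` and every `k`-algebra `B`,
Morita equivalence of `A[s₁,…,sₙ]` and `B[t₁,…,tₙ]` implies Morita equivalence of `A` and `B`. -/
def StronglyMoritaCancellative (k A : Type u) [Field k] [Ring A] [Algebra k A] : Prop :=
  ∀ (n : ℕ), 1 ≤ n → ∀ (B : Type u) [Ring B] [Algebra k B],
    MoritaEquivalent (PolyExt A n) (PolyExt B n) → MoritaEquivalent A B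

/-- `A` is strongly retractable: every `k`-algebra isomorphism
`φ : A[s₁,…,sₙ] → B[t₁,…,tₙ]` (with `n ≥ 1`) satisfies `φ(A) = B`. -/
def StronglyRetractable (k A : Type u) [Field k] [Ring A] [Algebra k A] : Prop :=
  ∀ (n : ℕ), 1 ≤ n → ∀ (B : Type u) [Ring B] [Algebra k B]
    (φ : PolyExt A n ≃ₐ[k] PolyExt B n),
    φ '' Set.range (PolyExt.C k A n) = Set.range (PolyExt.C k B n)

/-- `A` is strongly detectable: for every `k`-algebra isomorphism
`φ : A[s₁,…,sₙ] → B[t₁,…,tₙ]` (with `n ≥ 1`), the subalgebra of `B[t₁,…,tₙ]` generated by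
`B` together with `φ(s₁),…,φ(sₙ)` is all of `B[t₁,…,tₙ]`. -/
def StronglyDetectable (k A : Type u) [Field k] [Ring A] [Algebra k A] : Prop :=
  ∀ (n : ℕ), 1 ≤ n → ∀ (B : Type u) [Ring B] [Algebra k B]
    (φ : PolyExt A n ≃ₐ[k] PolyExt B n),
    Algebra.adjoin k
      (Set.range (PolyExt.C k B n) ∪ Set.range fun i => φ (PolyExt.X A n i)) = ⊤


/-!
Let `Z` be the centre of `A`. Since `A[Y] = A ⊗_Z Z[Y]`, the map `τ` is `id_A ⊗ T` for the
`Z`-algebra endomorphism `T` of `Z[Y]` sending `Yᵢ` to `fᵢ`, and the generation hypothesis says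
exactly that `T` is surjective. A surjective endomorphism of `Z[Y₁,…,Yₙ]` is injective: the
kernel element, the images of the `Yᵢ` and chosen preimages of the `Yᵢ` all live over a finitely
generated, hence Noetherian, subring `R₀ ⊆ Z`, where `T` restricts to a surjective endomorphism
of `R₀[Y]`; on a Noetherian ring the kernels of the iterates of a surjective endomorphism
stabilise, which forces injectivity. So `T` is an automorphism, and then so is `id_A ⊗ T`.
-/

theorem IsNoetherianRing.injective_of_surjective_endomorphism {S : Type*} [Ring S]
    [IsNoetherianRing S] (T : S →+* S) (hT : Function.Surjective T) : Function.Injective T := by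
  let K : ℕ →o Ideal S :=
    ⟨fun k => RingHom.ker (T ^ k), monotone_nat_of_le_succ fun k x hx => by
      rw [RingHom.mem_ker] at hx ⊢
      rw [pow_succ', RingHom.mul_def, RingHom.comp_apply, hx, map_zero]⟩
  obtain ⟨k, hk⟩ := monotone_stabilizes_iff_noetherian.2 ‹_› K
  refine (injective_iff_map_eq_zero T).2 fun x hx => ?_
  obtain ⟨y, rfl⟩ : ∃ y, (T ^ k) y = x := by
    rw [RingHom.coe_pow]; exact hT.iterate k x
  have hy : y ∈ K (k + 1) := by
    show (T ^ (k + 1)) y = 0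
    rw [pow_succ', RingHom.mul_def, RingHom.comp_apply, hx]
  rwa [← hk (k + 1) k.le_succ] at hy

open MvPolynomial in
theorem MvPolynomial.injective_of_surjective_endomorphism {R σ : Type*} [CommRing R] [Finite σ]
    (φ : MvPolynomial σ R →ₐ[R] MvPolynomial σ R) (hφ : Function.Surjective φ) :
    Function.Injective φ := by
  classical
  refine (injective_iff_map_eq_zero φ).2 fun x hx => ?_
  choose G hG using fun i => hφ (X i)
  let s : Set R := x.coeffs ∪ ⋃ i, ((φ (X i)).coeffs ∪ (G i).coeffs : Set R)
  let R₀ := Algebra.adjoin ℤ s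
  have : Algebra.FiniteType ℤ R₀ := .adjoin_of_finite <|
    x.coeffs.finite_toSet.union <| Set.finite_iUnion fun i =>
      (φ (X i)).coeffs.finite_toSet.union (G i).coeffs.finite_toSet
  have : IsNoetherianRing R₀ := Algebra.FiniteType.isNoetherianRing ℤ R₀
  let ι : MvPolynomial σ R₀ →+* MvPolynomial σ R := map R₀.val.toRingHom
  have hι : Function.Injective ι := map_injective _ Subtype.val_injective
  have lift (p : MvPolynomial σ R) (hp : (p.coeffs : Set R) ⊆ s) : ∃ p₀, ι p₀ = p :=
    mem_range_map_iff_coeffs_subset.2 <| by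
      simpa using hp.trans (Algebra.subset_adjoin (R := ℤ))
  obtain ⟨x₀, hx₀⟩ := lift x Set.subset_union_left
  choose F hF using fun i => lift (φ (X i)) fun a ha =>
    Set.subset_union_right (Set.mem_iUnion.2 ⟨i, Or.inl ha⟩)
  choose G₀ hG₀ using fun i => lift (G i) fun a ha =>
    Set.subset_union_right (Set.mem_iUnion.2 ⟨i, Or.inr ha⟩)
  let φ₀ : MvPolynomial σ R₀ →ₐ[R₀] MvPolynomial σ R₀ := bind₁ F
  have hcomm (p) : ι (φ₀ p) = φ (ι p) := by
    change map _ (bind₁ F p) = φ (map _ p)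
    rw [map_bind₁, show (fun i => ι (F i)) = φ ∘ X from _root_.funext hF, ← aeval_eq_bind₁,
      ← aeval_unique]
  have hsurj : Function.Surjective φ₀ := by
    rw [← AlgHom.range_eq_top, eq_top_iff, ← adjoin_range_X, Algebra.adjoin_le_iff]
    rintro _ ⟨i, rfl⟩
    refine ⟨G₀ i, hι ?_⟩
    rw [AlgHom.toRingHom_eq_coe, RingHom.coe_coe, hcomm, hG₀, hG, map_X]
  have hφ₀x₀ : φ₀ x₀ = φ₀ 0 := hι (by rw [hcomm, hx₀, hx, map_zero, map_zero])
  rw [← hx₀, IsNoetherianRing.injective_of_surjective_endomorphism φ₀.toRingHom hsurj hφ₀x₀,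
    map_zero]

namespace PolyExt

open AddMonoidAlgebra

variable {A : Type u} [Ring A] {n : ℕ}

variable (A n) in
noncomputable def ofCenter : MvPolynomial (Fin n) (Subring.center A) →+* PolyExt A n :=
  mapRingHom _ (Subring.center A).subtype

theorem ofCenter_injective : Function.Injective (ofCenter A n) :=
  map_injective _ Subtype.val_injective

theorem range_ofCenter :
    Set.range (ofCenter A n) = {x : PolyExt A n | ∀ m, x.coeff m ∈ Set.center A} := by
  simp only [ofCenter, coe_mapRingHom, range_map, AddMonoidHom.coe_coe, Subring.coe_subtype,
    Subtype.range_coe_subtype]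
  rfl

theorem ofCenter_C (z : Subring.center A) :
    ofCenter A n (MvPolynomial.C z) = single 0 (z : A) :=
  mapRingHom_single _ _ _

theorem ofCenter_X (i : Fin n) : ofCenter A n (MvPolynomial.X i) = PolyExt.X A n i :=
  mapRingHom_single _ _ _

theorem commute_ofCenter (p : MvPolynomial (Fin n) (Subring.center A)) (x : PolyExt A n) :
    Commute (ofCenter A n p) x := by
  induction p using MvPolynomial.induction_on with
  | C z =>
    rw [ofCenter_C]
    exact single_commute (fun _ => AddCommute.all _ _)
      (fun _ => (Subring.mem_center_iff.1 z.2 _).symm) x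
  | add p q hp hq => rw [map_add]; exact hp.add_left hq
  | mul_X p i hp =>
    rw [map_mul, ofCenter_X]
    exact hp.mul_left
      (single_commute (fun _ => AddCommute.all _ _) (fun _ => Commute.one_left _) x)

theorem ringHom_ext {B : Type*} [Semiring B] {Φ Ψ : PolyExt A n →+* B}
    (hC : ∀ a, Φ (single 0 a) = Ψ (single 0 a)) (hX : ∀ i, Φ (X A n i) = Ψ (X A n i)) :
    Φ = Ψ := by
  refine AddMonoidAlgebra.ringHom_ext hC fun m => ?_
  induction m using Finsupp.induction with
  | zero => exact hC 1
  | single_add i e m _ _ ih =>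
    have hmonomial : single (Finsupp.single i e + m) (1 : A) = X A n i ^ e * single m 1 := by
      rw [X, single_pow, single_mul_single, one_pow, one_mul, Finsupp.smul_single, smul_eq_mul,
        mul_one]
    rw [hmonomial, map_mul, map_mul, map_pow, map_pow, hX, ih]

/-- Under `A[Y] = A ⊗_Z Z[Y]`, with `Z` the centre of `A`, this is `id_A ⊗ φ`. -/
noncomputable def baseChange
    (φ : MvPolynomial (Fin n) (Subring.center A) →ₐ[Subring.center A]
      MvPolynomial (Fin n) (Subring.center A)) :
    PolyExt A n →+* PolyExt A n :=
  liftNCRingHom singleZeroRingHom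
    ((ofCenter A n).toMonoidHom.comp
      (φ.toRingHom.toMonoidHom.comp (MvPolynomial.monomialOneHom (Subring.center A) (Fin n))))
    fun _ _ => (commute_ofCenter _ _).symm

variable {φ ψ : MvPolynomial (Fin n) (Subring.center A) →ₐ[Subring.center A]
  MvPolynomial (Fin n) (Subring.center A)}

theorem baseChange_single (m : Fin n →₀ ℕ) (a : A) :
    baseChange φ (single m a) = single 0 a * ofCenter A n (φ (MvPolynomial.monomial m 1)) :=
  liftNCRingHom_single _ _ _ _ _

theorem baseChange_single_zero (a : A) : baseChange φ (single 0 a) = single 0 a := by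
  rw [baseChange_single, ← MvPolynomial.C_apply, map_one, map_one, map_one, mul_one]

theorem baseChange_ofCenter (p : MvPolynomial (Fin n) (Subring.center A)) :
    baseChange φ (ofCenter A n p) = ofCenter A n (φ p) := by
  suffices (baseChange φ).comp (ofCenter A n) = (ofCenter A n).comp φ.toRingHom from
    RingHom.congr_fun this p
  refine MvPolynomial.ringHom_ext (fun z => ?_) (fun i => ?_)
  · change baseChange φ (ofCenter A n (MvPolynomial.C z)) =
      ofCenter A n (φ (algebraMap _ _ z))
    rw [ofCenter_C, baseChange_single_zero, φ.commutes, MvPolynomial.algebraMap_eq, ofCenter_C]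
  · change baseChange φ (ofCenter A n (MvPolynomial.X i)) =
      ofCenter A n (φ (MvPolynomial.X i))
    rw [ofCenter_X, X, baseChange_single, ← one_def, one_mul]
    rfl

theorem eq_baseChange {τ : PolyExt A n →+* PolyExt A n}
    (hC : ∀ a, τ (single 0 a) = single 0 a)
    (hX : ∀ i, τ (X A n i) = ofCenter A n (φ (MvPolynomial.X i))) : τ = baseChange φ :=
  ringHom_ext (fun a => by rw [hC, baseChange_single_zero])
    (fun i => by rw [hX, ← ofCenter_X, baseChange_ofCenter])

theorem baseChange_comp :
    baseChange (φ.comp ψ) = (baseChange φ).comp (baseChange (A := A) ψ) :=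
  (eq_baseChange (fun a => by simp only [RingHom.comp_apply, baseChange_single_zero])
    (fun i => by rw [RingHom.comp_apply, ← ofCenter_X, baseChange_ofCenter, baseChange_ofCenter,
      AlgHom.comp_apply])).symm

theorem baseChange_id : baseChange (AlgHom.id _ _) = RingHom.id (PolyExt A n) :=
  (eq_baseChange (fun _ => rfl) (fun i => by rw [AlgHom.id_apply, ofCenter_X]; rfl)).symm

theorem bijective_baseChange (hφ : Function.Bijective φ) :
    Function.Bijective (baseChange (A := A) φ) := by
  let e := AlgEquiv.ofBijective φ hφ
  have hleft : e.symm.toAlgHom.comp φ = AlgHom.id _ _ := AlgHom.ext e.symm_apply_apply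
  have hright : φ.comp e.symm.toAlgHom = AlgHom.id _ _ := AlgHom.ext e.apply_symm_apply
  refine Function.bijective_iff_has_inverse.2
    ⟨baseChange e.symm.toAlgHom, fun x => ?_, fun x => ?_⟩
  · rw [← RingHom.comp_apply, ← baseChange_comp, hleft, baseChange_id, RingHom.id_apply]
  · rw [← RingHom.comp_apply, ← baseChange_comp, hright, baseChange_id, RingHom.id_apply]

end PolyExt

/-- (Brewer–Rutter) Let `Z` be the center of `A` and let
`f₁,…,fₙ ∈ Z[Y₁,…,Yₙ] ⊆ A[Y₁,…,Yₙ]` (polynomials all of whose coefficients are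
central) be `Z`-algebra generators of `Z[Y₁,…,Yₙ]`.  Then the endomorphism `τ` of
`A[Y₁,…,Yₙ]` restricting to the identity on `A` and sending `Yᵢ` to `fᵢ` is an
isomorphism.  Here `Z[Y₁,…,Yₙ]` is formalized as the set of polynomials with all
coefficients in the center of `A`. -/
theorem endomorphism_sending_vars_to_central_generators_is_isomorphism
    (k A : Type u) [Field k] [Ring A] [Algebra k A] (n : ℕ)
    (f : Fin n → PolyExt A n)
    (hf : ∀ i, ∀ m, (f i).coeff m ∈ Set.center A)
    (hgen : (Subring.closure
        ((PolyExt.C k A n) '' Set.center A ∪ Set.range f) : Set (PolyExt A n)) =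
      {x : PolyExt A n | ∀ m, x.coeff m ∈ Set.center A})
    (τ : PolyExt A n →+* PolyExt A n)
    (hτA : ∀ a : A, τ (PolyExt.C k A n a) = PolyExt.C k A n a)
    (hτX : ∀ i, τ (PolyExt.X A n i) = f i) :
    Function.Bijective τ := by
  choose F hF using fun i => show f i ∈ Set.range (PolyExt.ofCenter A n) by
    rw [PolyExt.range_ofCenter]; exact hf i
  let T : MvPolynomial (Fin n) (Subring.center A) →ₐ[Subring.center A]
    MvPolynomial (Fin n) (Subring.center A) := MvPolynomial.aeval F
  have hτT : τ = PolyExt.baseChange T :=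
    PolyExt.eq_baseChange hτA fun i => by rw [hτX, MvPolynomial.aeval_X, hF]
  have hT : Function.Surjective T := by
    have hgenerators : PolyExt.C k A n '' Set.center A ∪ Set.range f ⊆
        ((PolyExt.ofCenter A n).comp T.toRingHom).range := by
      rintro _ (⟨a, ha, rfl⟩ | ⟨i, rfl⟩)
      · exact ⟨MvPolynomial.C ⟨a, ha⟩,
          (congrArg (PolyExt.ofCenter A n) (T.commutes _)).trans (PolyExt.ofCenter_C _)⟩
      · exact ⟨MvPolynomial.X i,
          (congrArg (PolyExt.ofCenter A n) (MvPolynomial.aeval_X F i)).trans (hF i)⟩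
    intro p
    have hp : PolyExt.ofCenter A n p ∈ (Subring.closure
        (PolyExt.C k A n '' Set.center A ∪ Set.range f) : Set (PolyExt A n)) := by
      rw [hgen, ← PolyExt.range_ofCenter]
      exact ⟨p, rfl⟩
    obtain ⟨q, hq⟩ := Subring.closure_le.2 hgenerators hp
    exact ⟨q, PolyExt.ofCenter_injective hq⟩
  rw [hτT]
  exact PolyExt.bijective_baseChange
    ⟨MvPolynomial.injective_of_surjective_endomorphism T hT, hT⟩
end

section
/- Let A and B be commutative k-algebras and let σ: A[s1,...,sn] → B[t1,...,tn] be a k-algebra isomorphism; set fi = σ(si) for i = 1,...,n. Suppose that the images f̄1,...,f̄n of f1,...,fn in (B/N(B))[t̄1,...,t̄n] = B[t1,...,tn]/N(B[t1,...,tn]) generate this ring as a (B/N(B))-algebra. Then f1,...,fn generate B[t1,...,tn] as a B-algebra and f1,...,fn are algebraically independent over B; that is, B[t1,...,tn] = B[f1,...,fn] with f1,...,fn regarded as commuting indeterminates over B. -/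
/-!
Write `S = B[f₁,…,fₙ]` and `R = B[t₁,…,tₙ]`. Modulo the nilradical each `tⱼ` lies in `S`, so
`tⱼ = sⱼ + νⱼ` with `sⱼ ∈ S` and `νⱼ` nilpotent. The finitely many coefficients of the `νⱼ` span
a nilpotent ideal `J` of `B`, and `R = S + J R`; iterating, `R = S + Jᵐ R = S`. Hence the
`B`-algebra endomorphism `tᵢ ↦ fᵢ` of `R` is surjective, and a surjective endomorphism of a
polynomial ring in finitely many variables is injective: it descends to a polynomial ring over
a finitely generated subring of `B`, which is noetherian, where the kernels of its iterates
stabilise.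
-/

open MvPolynomial

theorem Submodule.eq_top_of_sup_smul_top_eq_top {R M : Type*} [CommSemiring R]
    [AddCommMonoid M] [Module R M] {I : Ideal R} (hI : IsNilpotent I) {P : Submodule R M}
    (h : P ⊔ I • ⊤ = ⊤) : P = ⊤ := by
  have sup_pow_smul_top : ∀ k : ℕ, P ⊔ I ^ k • ⊤ = ⊤ := by
    intro k
    induction k with
    | zero => simp
    | succ k ih =>
      refine eq_top_iff.2 (h.symm.trans_le ?_)
      calc P ⊔ I • ⊤ = P ⊔ (I • P ⊔ I • I ^ k • ⊤) := by rw [← Submodule.smul_sup, ih]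
        _ ≤ P ⊔ I ^ (k + 1) • ⊤ := by
          rw [pow_succ', Submodule.mul_smul]
          exact sup_le le_sup_left (sup_le (smul_le_right.trans le_sup_left) le_sup_right)
  obtain ⟨m, hm⟩ := hI
  simpa [hm] using sup_pow_smul_top m

theorem Subalgebra.eq_top_of_forall_sub_mem_map_of_isNilpotent {R A : Type*} [CommRing R]
    [CommRing A] [Algebra R A] {I : Ideal R} (hI : IsNilpotent I) {S : Subalgebra R A}
    {s : Set A} (hs : Algebra.adjoin R s = ⊤)
    (h : ∀ x ∈ s, ∃ y ∈ S, x - y ∈ I.map (algebraMap R A)) : S = ⊤ := by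
  set q := Ideal.Quotient.mkₐ R (I.map (algebraMap R A))
  have hq : S.map q = ⊤ := by
    rw [eq_top_iff, ← (AlgHom.range_eq_top q).2 (Ideal.Quotient.mkₐ_surjective R _),
      ← Algebra.map_top, ← hs, AlgHom.map_adjoin, Algebra.adjoin_le_iff]
    rintro _ ⟨x, hx, rfl⟩
    obtain ⟨y, hy, hxy⟩ := h x hx
    exact ⟨y, hy, Ideal.Quotient.eq.2 (by simpa using neg_mem hxy)⟩
  rw [← Algebra.toSubmodule_eq_top]
  refine Submodule.eq_top_of_sup_smul_top_eq_top hI (eq_top_iff.2 fun x _ => ?_)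
  obtain ⟨y, hy, hyx⟩ := hq ▸ Algebra.mem_top (x := q x)
  rw [Ideal.smul_top_eq_map]
  exact Submodule.mem_sup.2 ⟨y, hy, x - y, Ideal.Quotient.eq.1 hyx.symm, by ring⟩

theorem MvPolynomial.exists_isNilpotent_forall_mem_map_C {ι σ R : Type*} [Finite ι]
    [CommRing R] {ν : ι → MvPolynomial σ R} (hν : ∀ i, IsNilpotent (ν i)) :
    ∃ J : Ideal R, IsNilpotent J ∧ ∀ i, ν i ∈ J.map C := by
  classical
  refine ⟨Ideal.span (⋃ i, ((ν i).coeffs : Set R)), ?_, fun i => mem_map_C_iff.2 fun m => ?_⟩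
  · have hfg : (Ideal.span (⋃ i, ((ν i).coeffs : Set R))).FG :=
      Submodule.fg_def.2 ⟨_, Set.finite_iUnion fun i => (ν i).coeffs.finite_toSet, rfl⟩
    rw [hfg.isNilpotent_iff_le_nilradical]
    refine Ideal.span_le.2 (Set.iUnion_subset fun i c hc => ?_)
    obtain ⟨m, -, rfl⟩ := mem_coeffs_iff.1 hc
    exact mem_nilradical.2 (isNilpotent_iff.1 (hν i) m)
  · by_cases hm : (ν i).coeff m = 0
    · simp [hm]
    · exact Ideal.subset_span (Set.mem_iUnion.2 ⟨i, coeff_mem_coeffs m hm⟩)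

theorem RingHom.injective_of_surjective_of_isNoetherianRing {R : Type*} [CommRing R]
    [IsNoetherianRing R] (ψ : R →+* R) (hψ : Function.Surjective ψ) : Function.Injective ψ := by
  have mem_ker_pow (i : ℕ) (x : R) : x ∈ RingHom.ker (ψ ^ i) ↔ ψ^[i] x = 0 := by
    rw [RingHom.mem_ker, RingHom.coe_pow]
  let K : ℕ →o Ideal R := ⟨fun i => RingHom.ker (ψ ^ i), monotone_nat_of_le_succ fun i x hx => by
    rw [mem_ker_pow] at hx ⊢
    rw [Function.iterate_succ_apply', hx, map_zero]⟩
  obtain ⟨N, hN⟩ := monotone_stabilizes_iff_noetherian.2 inferInstance K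
  refine (injective_iff_map_eq_zero ψ).2 fun x hx => ?_
  obtain ⟨b, rfl⟩ := hψ.iterate N x
  have hb : b ∈ K N := by
    rw [hN (N + 1) N.le_succ]
    exact (mem_ker_pow _ b).2 (by rw [Function.iterate_succ_apply', hx])
  exact (mem_ker_pow N b).1 hb

theorem MvPolynomial.bind₁_injective_of_surjective {σ R : Type*} [Finite σ] [CommRing R]
    {f : σ → MvPolynomial σ R} (hf : Function.Surjective (bind₁ f)) :
    Function.Injective (bind₁ f) := by
  classical
  choose g hg using fun i => hf (X i)
  refine (injective_iff_map_eq_zero (bind₁ f)).2 fun p hp => ?_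
  let c : Set R := p.coeffs ∪ ⋃ i, ((f i).coeffs ∪ (g i).coeffs : Set R)
  let R₀ := Subring.closure c
  have : IsNoetherianRing R₀ := is_noetherian_subring_closure c
    ((p.coeffs.finite_toSet).union (Set.finite_iUnion fun i =>
      ((f i).coeffs.finite_toSet).union (g i).coeffs.finite_toSet))
  let ι : MvPolynomial σ R₀ →+* MvPolynomial σ R := map R₀.subtype
  have hι : Function.Injective ι := map_injective _ Subtype.val_injective
  have lift (q : MvPolynomial σ R) (hq : (q.coeffs : Set R) ⊆ c) : ∃ q₀, ι q₀ = q :=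
    mem_range_map_iff_coeffs_subset.2 (by simpa using hq.trans Subring.subset_closure)
  obtain ⟨p₀, hpp₀⟩ := lift p Set.subset_union_left
  choose f₀ hf₀ using fun i => lift (f i) fun x hx =>
    Or.inr (Set.mem_iUnion.2 ⟨i, Or.inl hx⟩)
  choose g₀ hg₀ using fun i => lift (g i) fun x hx =>
    Or.inr (Set.mem_iUnion.2 ⟨i, Or.inr hx⟩)
  have hι_bind₁ (q : MvPolynomial σ R₀) : ι (bind₁ f₀ q) = bind₁ f (ι q) := by
    simp only [ι, map_bind₁, hf₀]
  have hsurj₀ : Function.Surjective (bind₁ f₀) := by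
    rw [← AlgHom.range_eq_top, eq_top_iff, ← adjoin_range_X, Algebra.adjoin_le_iff]
    rintro _ ⟨i, rfl⟩
    exact ⟨g₀ i, hι (show ι (bind₁ f₀ (g₀ i)) = ι (X i) by
      rw [hι_bind₁, hg₀, hg, map_X])⟩
  have hp₀ : bind₁ f₀ p₀ = 0 := hι (by rw [hι_bind₁, hpp₀, hp, map_zero])
  rw [← hpp₀, RingHom.injective_of_surjective_of_isNoetherianRing (bind₁ f₀).toRingHom hsurj₀
    (hp₀.trans (map_zero _).symm), map_zero]

theorem MvPolynomial.algebraicIndependent_of_adjoin_range_eq_top {σ R : Type*} [Finite σ]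
    [CommRing R] {f : σ → MvPolynomial σ R} (hf : Algebra.adjoin R (Set.range f) = ⊤) :
    AlgebraicIndependent R f := by
  rw [algebraicIndependent_iff_injective_aeval, aeval_eq_bind₁]
  refine bind₁_injective_of_surjective ?_
  rw [← aeval_eq_bind₁, ← AlgHom.range_eq_top, ← Algebra.adjoin_range_eq_range_aeval, hf]

theorem generators_modulo_nilradical_lift_general
    (B : Type u) [CommRing B]
    (n : ℕ)
    (f : Fin n → MvPolynomial (Fin n) B)
    (hgen : Algebra.adjoin B
        (Set.range fun i =>
          Ideal.Quotient.mk (nilradical (MvPolynomial (Fin n) B)) (f i)) = ⊤) :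
    Algebra.adjoin B (Set.range f) = ⊤ ∧ AlgebraicIndependent B f := by
  set S := Algebra.adjoin B (Set.range f)
  set q := Ideal.Quotient.mkₐ B (nilradical (MvPolynomial (Fin n) B))
  have hS : S.map q = ⊤ := by
    rw [AlgHom.map_adjoin, ← Set.range_comp]
    exact hgen
  have hX (j : Fin n) : ∃ s ∈ S, IsNilpotent (X j - s) := by
    obtain ⟨s, hs, hsX⟩ := hS ▸ Algebra.mem_top (x := q (X j))
    exact ⟨s, hs, mem_nilradical.1 (Ideal.Quotient.eq.1 hsX.symm)⟩
  choose s hsS hν using hX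
  obtain ⟨J, hJ, hνJ⟩ := exists_isNilpotent_forall_mem_map_C hν
  have htop : S = ⊤ := S.eq_top_of_forall_sub_mem_map_of_isNilpotent hJ adjoin_range_X
    (by rintro _ ⟨j, rfl⟩; exact ⟨s j, hsS j, hνJ j⟩)
  exact ⟨htop, algebraicIndependent_of_adjoin_range_eq_top htop⟩

/-- Let `A`, `B` be commutative `k`-algebras and
`σ : A[s₁,…,sₙ] → B[t₁,…,tₙ]` a `k`-algebra isomorphism; set `fᵢ = σ(sᵢ)`.  If the
images of the `fᵢ` in `B[t₁,…,tₙ]/N(B[t₁,…,tₙ]) = (B/N(B))[t̄₁,…,t̄ₙ]` generate that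
ring as a `B/N(B)`-algebra (equivalently, as a `B`-algebra), then the `fᵢ` generate
`B[t₁,…,tₙ]` as a `B`-algebra and are algebraically independent over `B`. -/
theorem generators_modulo_nilradical_lift
    (k A B : Type u) [Field k] [CommRing A] [CommRing B] [Algebra k A] [Algebra k B]
    (n : ℕ)
    (σ : MvPolynomial (Fin n) A ≃ₐ[k] MvPolynomial (Fin n) B)
    (f : Fin n → MvPolynomial (Fin n) B)
    (hf : ∀ i, f i = σ (MvPolynomial.X i))
    (hgen : Algebra.adjoin B
        (Set.range fun i =>
          Ideal.Quotient.mk (nilradical (MvPolynomial (Fin n) B)) (f i)) = ⊤) :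
    Algebra.adjoin B (Set.range f) = ⊤ ∧ AlgebraicIndependent B f :=
  generators_modulo_nilradical_lift_general B n f hgen
end

section
/- Let A and B be k-algebras such that the tensor product A ⊗_k B is a domain. If D_A(1) = A and D_B(1) = B, then D_{A⊗_k B}(1) = A ⊗_k B. -/
open scoped TensorProduct

universe u

/-- `Sw(F)`: the set of all `g` such that `f = a * g * b` for some `a, b` and some
nonzero `f ∈ F` (the set of subwords of elements of `F`). -/
def subwords {A : Type u} [Ring A] (F : Set A) : Set A :=
  {g | ∃ f ∈ F, f ≠ 0 ∧ ∃ a b : A, f = a * g * b}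

/-- The `n`-th stage `Dₙ(F)` in the construction of the divisor subalgebra:
`D₀(F) = F` and `Dₙ₊₁(F)` is the `k`-subalgebra generated by `Sw(Dₙ(F))`. -/
def divisorStage (k : Type u) {A : Type u} [Field k] [Ring A] [Algebra k A] :
    ℕ → Set A → Set A
  | 0, F => F
  | n + 1, F => (Algebra.adjoin k (subwords (divisorStage k n F)) : Subalgebra k A)

/-- The divisor subalgebra `𝔻_A(F) = ⋃ₙ Dₙ(F)`. -/
def divisorSubalgebra (k : Type u) {A : Type u} [Field k] [Ring A] [Algebra k A]
    (F : Set A) : Set A :=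
  ⋃ n, divisorStage k n F

/-! The stages `Dₙ(F)` increase with `n` and are subalgebras from `n = 1` on, so `𝔻_A(F)` is a
subalgebra; an injective algebra map sends `Dₙ(F)` into `Dₙ(φ F)`, because it preserves
factorisations of nonzero elements. Hence `𝔻_{A ⊗ B}(1)` is a subalgebra containing `A ⊗ 1` and
`1 ⊗ B` (the inclusions are injective since `A` and `B` are nontrivial over a field), which
generate `A ⊗ B`. -/

namespace TensorProduct

lemma nontrivial_left {R M N : Type*} [CommSemiring R] [AddCommMonoid M] [AddCommMonoid N]
    [Module R M] [Module R N] [Nontrivial (M ⊗[R] N)] : Nontrivial M := by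
  by_contra h
  rw [not_nontrivial_iff_subsingleton] at h
  exact not_subsingleton (M ⊗[R] N) inferInstance

lemma nontrivial_right {R M N : Type*} [CommSemiring R] [AddCommMonoid M] [AddCommMonoid N]
    [Module R M] [Module R N] [Nontrivial (M ⊗[R] N)] : Nontrivial N := by
  by_contra h
  rw [not_nontrivial_iff_subsingleton] at h
  exact not_subsingleton (M ⊗[R] N) inferInstance

end TensorProduct

section DivisorSubalgebra

variable {k A C : Type u} [Field k] [Ring A] [Ring C] [Algebra k A] [Algebra k C]

lemma subwords_mono {F G : Set A} (h : F ⊆ G) : subwords F ⊆ subwords G :=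
  fun _ ⟨f, hf, hf0, a, b, hfab⟩ => ⟨f, h hf, hf0, a, b, hfab⟩

lemma image_subwords_subset (φ : A →ₐ[k] C) (hφ : Function.Injective φ) (F : Set A) :
    φ '' subwords F ⊆ subwords (φ '' F) := by
  rintro _ ⟨g, ⟨f, hf, hf0, a, b, rfl⟩, rfl⟩
  exact ⟨φ (a * g * b), Set.mem_image_of_mem φ hf, (map_ne_zero_iff φ hφ).2 hf0,
    φ a, φ b, by simp only [map_mul]⟩

lemma subset_divisorStage_succ (n : ℕ) (F : Set A) :
    divisorStage k n F ⊆ divisorStage k (n + 1) F := by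
  intro x hx
  by_cases h : x = 0
  · exact h ▸ zero_mem (Algebra.adjoin k (subwords (divisorStage k n F)))
  · exact Algebra.subset_adjoin ⟨x, hx, h, 1, 1, by simp⟩

lemma image_divisorStage_subset (φ : A →ₐ[k] C) (hφ : Function.Injective φ) (n : ℕ)
    (F : Set A) : φ '' divisorStage k n F ⊆ divisorStage k n (φ '' F) := by
  induction n with
  | zero => exact subset_rfl
  | succ n ih =>
    change (Algebra.adjoin k _).map φ ≤ Algebra.adjoin k _
    rw [AlgHom.map_adjoin]
    exact Algebra.adjoin_mono ((image_subwords_subset φ hφ _).trans (subwords_mono ih))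

lemma image_divisorSubalgebra_subset (φ : A →ₐ[k] C) (hφ : Function.Injective φ)
    (F : Set A) : φ '' divisorSubalgebra k F ⊆ divisorSubalgebra k (φ '' F) := by
  rw [divisorSubalgebra, Set.image_iUnion]
  exact Set.iUnion_mono fun n => image_divisorStage_subset φ hφ n F

lemma map_mem_divisorSubalgebra_one (φ : A →ₐ[k] C) (hφ : Function.Injective φ) {x : A}
    (hx : x ∈ divisorSubalgebra k {1}) : φ x ∈ divisorSubalgebra k {1} := by
  simpa using image_divisorSubalgebra_subset φ hφ {1} ⟨x, hx, rfl⟩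

variable (k) in
noncomputable def divisorSubalgebra.toSubalgebra (F : Set A) : Subalgebra k A :=
  ⨆ n, Algebra.adjoin k (subwords (divisorStage k n F))

lemma divisorSubalgebra.coe_toSubalgebra (F : Set A) :
    (divisorSubalgebra.toSubalgebra k F : Set A) = divisorSubalgebra k F := by
  have hmono : Monotone fun n => Algebra.adjoin k (subwords (divisorStage k n F)) :=
    monotone_nat_of_le_succ fun n => subset_divisorStage_succ (n + 1) F
  rw [divisorSubalgebra.toSubalgebra, Subalgebra.coe_iSup_of_directed hmono.directed_le]
  refine subset_antisymm
    (Set.iUnion_subset fun n => Set.subset_iUnion (fun n => divisorStage k n F) (n + 1)) ?_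
  exact Set.iUnion_subset fun n =>
    (subset_divisorStage_succ n F).trans (Set.subset_iUnion (fun n => divisorStage k (n + 1) F) n)

end DivisorSubalgebra

/-- If `A ⊗_k B` is a domain and `𝔻_A(1) = A`, `𝔻_B(1) = B`, then
`𝔻_{A ⊗ B}(1) = A ⊗_k B`. -/
theorem divisorSubalgebra_tensorProduct
    (k A B : Type u) [Field k] [Ring A] [Ring B] [Algebra k A] [Algebra k B]
    [IsDomain (A ⊗[k] B)]
    (hA : divisorSubalgebra k ({1} : Set A) = Set.univ)
    (hB : divisorSubalgebra k ({1} : Set B) = Set.univ) :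
    divisorSubalgebra k ({1} : Set (A ⊗[k] B)) = Set.univ := by
  have : Nontrivial A := TensorProduct.nontrivial_left (R := k) (N := B)
  have : Nontrivial B := TensorProduct.nontrivial_right (R := k) (M := A)
  have ha (a : A) : a ⊗ₜ[k] (1 : B) ∈ divisorSubalgebra k {1} :=
    map_mem_divisorSubalgebra_one Algebra.TensorProduct.includeLeft
      (Algebra.TensorProduct.includeLeft_injective (algebraMap k B).injective)
      (hA ▸ Set.mem_univ a)
  have hb (b : B) : (1 : A) ⊗ₜ[k] b ∈ divisorSubalgebra k {1} :=
    map_mem_divisorSubalgebra_one (Algebra.TensorProduct.includeRight : B →ₐ[k] A ⊗[k] B)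
      (Algebra.TensorProduct.includeRight_injective (algebraMap k A).injective)
      (hB ▸ Set.mem_univ b)
  simp only [← divisorSubalgebra.coe_toSubalgebra, SetLike.mem_coe] at ha hb ⊢
  rw [← Algebra.coe_top (R := k), SetLike.coe_set_eq, eq_top_iff,
    ← Algebra.TensorProduct.adjoin_tmul_eq_top, Algebra.adjoin_le_iff]
  rintro _ ⟨a, b, rfl⟩
  simpa using mul_mem (ha a) (hb b)
end
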